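/- Let A be a classical channel on a finite set X with a fixed point distribution σ* satisfying λ := min_x σ*(x) > 0. Let ε > 0, δ ∈ (0,1), ε' ∈ (0, ε), and set f := (e^ε − 1 + 2δ)/(e^ε + 1) < 1. Suppose A satisfies (ε,δ)-LDP (so its trace-distance contraction coefficient is at most f). If n ≥ max( ln((e^{ε'}−1)λ/2)/ln f , ln(λ/2)/ln f ), then for all distributions p, q: E_{e^{ε'}}(A^{(n)} p ‖ A^{(n)} q) = 0, i.e., A^{(n)} satisfies (ε', 0)-LDP. -/
import Mathlib


open Finset Real

def IsProb {X : Type*} [Fintype X] (p : X → ℝ) : Prop :=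
  (∀ x, 0 ≤ p x) ∧ ∑ x, p x = 1

noncomputable def hsDiv {X : Type*} [Fintype X] (γ : ℝ) (p q : X → ℝ) : ℝ :=
  ∑ x, max 0 (p x - γ * q x)

noncomputable def push {X : Type*} [Fintype X] (A : X → X → ℝ) (p : X → ℝ) : X → ℝ :=
  fun y => ∑ x, A x y * p x

lemma hsDiv_nonneg {X : Type*} [Fintype X] (γ : ℝ) (p q : X → ℝ) : 0 ≤ hsDiv γ p q :=
  Finset.sum_nonneg fun _ _ => le_max_left _ _

lemma hsDiv_one {X : Type*} [Fintype X] (p q : X → ℝ) :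
    hsDiv 1 p q = ∑ x, max 0 (p x - q x) := by simp [hsDiv]

lemma single_le_hsDiv_one {X : Type*} [Fintype X] (p q : X → ℝ) (y : X) :
    p y - q y ≤ hsDiv 1 p q := by
  rw [hsDiv_one]
  exact le_trans (le_max_right 0 _)
    (Finset.single_le_sum (f := fun x => max 0 (p x - q x))
      (fun x _ => le_max_left _ _) (Finset.mem_univ y))

lemma hsDiv_one_le_one {X : Type*} [Fintype X] (p q : X → ℝ)
    (hp : IsProb p) (hq : IsProb q) : hsDiv 1 p q ≤ 1 := by
  rw [hsDiv_one, ← hp.2]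
  exact Finset.sum_le_sum fun x _ =>
    max_le (hp.1 x) (by linarith [hq.1 x])

lemma push_isProb {X : Type*} [Fintype X] (A : X → X → ℝ) (hA : ∀ x, IsProb (A x))
    (p : X → ℝ) (hp : IsProb p) : IsProb (push A p) := by
  constructor
  · intro y
    exact Finset.sum_nonneg fun x _ => mul_nonneg ((hA x).1 y) (hp.1 x)
  · rw [show ∑ y, push A p y = ∑ x, (∑ y, A x y) * p x by
      simp only [push]
      rw [Finset.sum_comm]
      exact Finset.sum_congr rfl fun x _ => by rw [Finset.sum_mul]]
    rw [← hp.2]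
    exact Finset.sum_congr rfl fun x _ => by rw [(hA x).2, one_mul]

lemma iter_isProb {X : Type*} [Fintype X] (A : X → X → ℝ) (hA : ∀ x, IsProb (A x))
    (p : X → ℝ) (hp : IsProb p) (n : ℕ) : IsProb ((push A)^[n] p) := by
  induction n with
  | zero => simpa using hp
  | succ n ih => rw [Function.iterate_succ_apply']; exact push_isProb A hA _ ih

lemma tv_pair {X : Type*} [Fintype X] (γ δ : ℝ) (hγ : 1 ≤ γ) (p q : X → ℝ)
    (hp : IsProb p) (hq : IsProb q)
    (h1 : hsDiv γ p q ≤ δ) (h2 : hsDiv γ q p ≤ δ) :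
    hsDiv 1 p q ≤ (γ - 1 + 2 * δ) / (γ + 1) := by
  classical
  set S : Finset X := Finset.univ.filter (fun y => q y < p y) with hS
  have hT : hsDiv 1 p q = (∑ y ∈ S, p y) - (∑ y ∈ S, q y) := by
    rw [hsDiv_one, ← Finset.sum_filter_add_sum_filter_not Finset.univ (fun y => q y < p y)
      (fun y => max 0 (p y - q y)), ← Finset.sum_sub_distrib]
    have e1 : ∑ y ∈ S, max 0 (p y - q y) = ∑ y ∈ S, (p y - q y) :=
      Finset.sum_congr rfl fun y hy => max_eq_right
        (by have := (Finset.mem_filter.mp hy).2; linarith)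
    have e2 : ∑ y ∈ Finset.univ.filter (fun y => ¬ q y < p y), max 0 (p y - q y) = 0 :=
      Finset.sum_eq_zero fun y hy => max_eq_left
        (by have := (Finset.mem_filter.mp hy).2; push_neg at this; linarith)
    rw [e1, e2, add_zero]
  have hPs : ∑ y ∈ Finset.univ.filter (fun y => ¬ q y < p y), p y
      = 1 - ∑ y ∈ S, p y := by
    have := Finset.sum_filter_add_sum_filter_not Finset.univ (fun y => q y < p y) p
    rw [hp.2] at this; linarith
  have hQs : ∑ y ∈ Finset.univ.filter (fun y => ¬ q y < p y), q y
      = 1 - ∑ y ∈ S, q y := by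
    have := Finset.sum_filter_add_sum_filter_not Finset.univ (fun y => q y < p y) q
    rw [hq.2] at this; linarith
  have key1 : (∑ y ∈ S, p y) - γ * (∑ y ∈ S, q y) ≤ δ := by
    have : ∑ y ∈ S, (p y - γ * q y) ≤ hsDiv γ p q := by
      calc ∑ y ∈ S, (p y - γ * q y) ≤ ∑ y ∈ S, max 0 (p y - γ * q y) :=
            Finset.sum_le_sum fun y _ => le_max_right _ _
        _ ≤ ∑ y, max 0 (p y - γ * q y) :=
            Finset.sum_le_sum_of_subset_of_nonneg (Finset.subset_univ S)
              (fun y _ _ => le_max_left _ _)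
        _ = hsDiv γ p q := rfl
    rw [Finset.sum_sub_distrib, ← Finset.mul_sum] at this
    linarith
  have key2 : (1 - ∑ y ∈ S, q y) - γ * (1 - ∑ y ∈ S, p y) ≤ δ := by
    have : ∑ y ∈ Finset.univ.filter (fun y => ¬ q y < p y), (q y - γ * p y)
        ≤ hsDiv γ q p := by
      calc _ ≤ ∑ y ∈ Finset.univ.filter (fun y => ¬ q y < p y), max 0 (q y - γ * p y) :=
            Finset.sum_le_sum fun y _ => le_max_right _ _
        _ ≤ ∑ y, max 0 (q y - γ * p y) :=
            Finset.sum_le_sum_of_subset_of_nonneg (Finset.subset_univ _)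
              (fun y _ _ => le_max_left _ _)
        _ = hsDiv γ q p := rfl
    rw [Finset.sum_sub_distrib, ← Finset.mul_sum, hPs, hQs] at this
    linarith
  rw [hT, le_div_iff₀ (by linarith : (0:ℝ) < γ + 1)]
  nlinarith [key1, key2]

lemma contraction {X : Type*} [Fintype X] (A : X → X → ℝ) (hA : ∀ x, IsProb (A x))
    (f : ℝ) (hpair : ∀ a b, hsDiv 1 (A a) (A b) ≤ f)
    (p q : X → ℝ) (hp : IsProb p) (hq : IsProb q) :
    hsDiv 1 (push A p) (push A q) ≤ f * hsDiv 1 p q := by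
  classical
  rcases eq_or_lt_of_le (hsDiv_nonneg 1 p q) with h0 | hpos
  · -- hsDiv 1 p q = 0, so p = q
    have hle : ∀ x, p x ≤ q x := by
      intro x
      have := (Finset.sum_eq_zero_iff_of_nonneg
        (fun x _ => le_max_left 0 (p x - q x))).mp (by rw [← hsDiv_one]; exact h0.symm)
        x (Finset.mem_univ x)
      by_contra h
      push_neg at h
      have : (0:ℝ) < max 0 (p x - q x) := lt_max_of_lt_right (by linarith)
      linarith [this.ne' ‹max 0 (p x - q x) = 0›]
    have hpq : p = q := by
      funext x
      have hsum : ∑ x, (q x - p x) = 0 := by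
        rw [Finset.sum_sub_distrib, hp.2, hq.2, sub_self]
      have := (Finset.sum_eq_zero_iff_of_nonneg
        (fun x _ => by linarith [hle x])).mp hsum x (Finset.mem_univ x)
      linarith
    rw [hpq]
    simp [hsDiv_one]
  · set dp : X → ℝ := fun x => max 0 (p x - q x) with hdpdef
    set dm : X → ℝ := fun x => max 0 (q x - p x) with hdmdef
    have hdpn : ∀ x, 0 ≤ dp x := fun x => le_max_left _ _
    have hdmn : ∀ x, 0 ≤ dm x := fun x => le_max_left _ _
    have hdiff : ∀ x, dp x - dm x = p x - q x := by
      intro x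
      rcases le_total (p x) (q x) with h | h
      · rw [hdpdef, hdmdef]
        simp only []
        rw [max_eq_left (by linarith), max_eq_right (by linarith)]
        ring
      · rw [hdpdef, hdmdef]
        simp only []
        rw [max_eq_right (by linarith), max_eq_left (by linarith)]
        ring
    set t : ℝ := ∑ x, dp x with ht
    have htT : hsDiv 1 p q = t := by rw [hsDiv_one, ht]
    have hsm : ∑ x, dm x = t := by
      have : ∑ x, (dp x - dm x) = 0 := by
        rw [Finset.sum_congr rfl fun x _ => hdiff x, Finset.sum_sub_distrib, hp.2, hq.2,
          sub_self]
      rw [Finset.sum_sub_distrib] at this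
      linarith
    have htpos : 0 < t := by rw [← htT]; exact hpos
    have hpush : ∀ y, push A p y - push A q y
        = (∑ a, dp a * A a y) - (∑ b, dm b * A b y) := by
      intro y
      rw [push, push, ← Finset.sum_sub_distrib, ← Finset.sum_sub_distrib]
      exact Finset.sum_congr rfl fun x _ => by linear_combination (-(A x y)) * (hdiff x)
    have hrep : ∀ y, ∑ a, ∑ b, dp a * dm b * (A a y - A b y)
        = t * (push A p y - push A q y) := by
      intro y
      have l1 : ∑ a, ∑ b, dp a * dm b * (A a y - A b y)
          = (∑ a, dp a * A a y) * (∑ b, dm b) - (∑ a, dp a) * (∑ b, dm b * A b y) := by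
        rw [Finset.sum_mul, Finset.sum_mul, ← Finset.sum_sub_distrib]
        refine Finset.sum_congr rfl fun a _ => ?_
        rw [Finset.mul_sum, Finset.mul_sum, ← Finset.sum_sub_distrib]
        exact Finset.sum_congr rfl fun b _ => by ring
      rw [l1, hsm, ← ht, hpush y]
      ring
    have key : ∀ y, t * max 0 (push A p y - push A q y)
        ≤ ∑ a, ∑ b, dp a * dm b * max 0 (A a y - A b y) := by
      intro y
      have h1 : t * max 0 (push A p y - push A q y)
          = max 0 (t * (push A p y - push A q y)) := by
        rw [mul_max_of_nonneg _ _ (le_of_lt htpos), mul_zero]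
      rw [h1, ← hrep y]
      refine max_le ?_ ?_
      · exact Finset.sum_nonneg fun a _ => Finset.sum_nonneg fun b _ =>
          mul_nonneg (mul_nonneg (hdpn a) (hdmn b)) (le_max_left _ _)
      · refine Finset.sum_le_sum fun a _ => Finset.sum_le_sum fun b _ => ?_
        exact mul_le_mul_of_nonneg_left (le_max_right _ _)
          (mul_nonneg (hdpn a) (hdmn b))
    have main : t * hsDiv 1 (push A p) (push A q) ≤ t * (f * t) := by
      calc t * hsDiv 1 (push A p) (push A q)
          = ∑ y, t * max 0 (push A p y - push A q y) := by
            rw [hsDiv_one, Finset.mul_sum]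
        _ ≤ ∑ y, ∑ a, ∑ b, dp a * dm b * max 0 (A a y - A b y) :=
            Finset.sum_le_sum fun y _ => key y
        _ = ∑ a, ∑ b, dp a * dm b * (∑ y, max 0 (A a y - A b y)) := by
            rw [Finset.sum_comm]
            refine Finset.sum_congr rfl fun a _ => ?_
            rw [Finset.sum_comm]
            refine Finset.sum_congr rfl fun b _ => ?_
            rw [Finset.mul_sum]
        _ ≤ ∑ a, ∑ b, dp a * dm b * f := by
            refine Finset.sum_le_sum fun a _ => Finset.sum_le_sum fun b _ => ?_
            refine mul_le_mul_of_nonneg_left ?_ (mul_nonneg (hdpn a) (hdmn b))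
            rw [← hsDiv_one]
            exact hpair a b
        _ = t * (f * t) := by
            rw [show ∑ a, ∑ b, dp a * dm b * f = (∑ a, dp a) * ((∑ b, dm b) * f) by
              rw [Finset.sum_mul]
              refine Finset.sum_congr rfl fun a _ => ?_
              rw [← Finset.sum_mul, ← Finset.mul_sum]
              ring]
            rw [hsm, ← ht]
            ring
    rw [htT]
    exact le_of_mul_le_mul_left main htpos

lemma contraction_iter {X : Type*} [Fintype X] (A : X → X → ℝ) (hA : ∀ x, IsProb (A x))
    (f : ℝ) (hf0 : 0 ≤ f) (hpair : ∀ a b, hsDiv 1 (A a) (A b) ≤ f)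
    (p q : X → ℝ) (hp : IsProb p) (hq : IsProb q) (n : ℕ) :
    hsDiv 1 ((push A)^[n] p) ((push A)^[n] q) ≤ f ^ n * hsDiv 1 p q := by
  induction n with
  | zero => simp
  | succ n ih =>
    rw [Function.iterate_succ_apply', Function.iterate_succ_apply']
    calc hsDiv 1 (push A ((push A)^[n] p)) (push A ((push A)^[n] q))
        ≤ f * hsDiv 1 ((push A)^[n] p) ((push A)^[n] q) :=
          contraction A hA f hpair _ _ (iter_isProb A hA p hp n) (iter_isProb A hA q hq n)
      _ ≤ f * (f ^ n * hsDiv 1 p q) := mul_le_mul_of_nonneg_left ih hf0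
      _ = f ^ (n + 1) * hsDiv 1 p q := by ring

theorem stmt16 {X : Type*} [Fintype X] [Nonempty X] (A : X → X → ℝ)
    (hA : ∀ x, IsProb (A x)) (σs : X → ℝ) (hσ : IsProb σs)
    (hfix : push A σs = σs)
    (hlam : 0 < Finset.univ.inf' Finset.univ_nonempty σs)
    (ε ε' δ : ℝ) (hε : 0 < ε) (hδ0 : 0 < δ) (hδ1 : δ < 1)
    (hε'0 : 0 < ε') (hε'ε : ε' < ε)
    (hLDP : ∀ a b : X, hsDiv (Real.exp ε) (A a) (A b) ≤ δ)
    (n : ℕ)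
    (hn : max
        (Real.log ((Real.exp ε' - 1) * (Finset.univ.inf' Finset.univ_nonempty σs) / 2)
          / Real.log ((Real.exp ε - 1 + 2 * δ) / (Real.exp ε + 1)))
        (Real.log ((Finset.univ.inf' Finset.univ_nonempty σs) / 2)
          / Real.log ((Real.exp ε - 1 + 2 * δ) / (Real.exp ε + 1))) ≤ (n : ℝ)) :
    ∀ p q : X → ℝ, IsProb p → IsProb q →
      hsDiv (Real.exp ε') ((push A)^[n] p) ((push A)^[n] q) = 0 := by
  set lam : ℝ := Finset.univ.inf' Finset.univ_nonempty σs with hlamdef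
  set f : ℝ := (Real.exp ε - 1 + 2 * δ) / (Real.exp ε + 1) with hfdef
  have hexp1 : 1 < Real.exp ε := by
    rw [show (1:ℝ) = Real.exp 0 by simp]
    exact Real.exp_lt_exp.mpr hε
  have hexp'1 : 1 < Real.exp ε' := by
    rw [show (1:ℝ) = Real.exp 0 by simp]
    exact Real.exp_lt_exp.mpr hε'0
  have hf0 : 0 < f := div_pos (by linarith) (by linarith)
  have hf1 : f < 1 := (div_lt_one (by linarith)).mpr (by linarith)
  have hlogf : Real.log f < 0 := Real.log_neg hf0 hf1
  have hc1 : 0 < (Real.exp ε' - 1) * lam / 2 := by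
    apply div_pos (mul_pos (by linarith) hlam) two_pos
  have hc2 : 0 < lam / 2 := by positivity
  have hfn : ∀ c : ℝ, 0 < c → Real.log c / Real.log f ≤ (n : ℝ) → f ^ n ≤ c := by
    intro c hc h
    have hmul : (n : ℝ) * Real.log f ≤ Real.log c := by
      rw [div_le_iff_of_neg hlogf] at h
      linarith
    calc f ^ n = Real.exp ((n : ℝ) * Real.log f) := by
          rw [Real.exp_nat_mul, Real.exp_log hf0]
      _ ≤ Real.exp (Real.log c) := Real.exp_le_exp.mpr hmul
      _ = c := Real.exp_log hc
  have hfn1 : f ^ n ≤ (Real.exp ε' - 1) * lam / 2 :=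
    hfn _ hc1 (le_trans (le_max_left _ _) hn)
  have hfn2 : f ^ n ≤ lam / 2 := hfn _ hc2 (le_trans (le_max_right _ _) hn)
  have hpair : ∀ a b, hsDiv 1 (A a) (A b) ≤ f := fun a b =>
    tv_pair (Real.exp ε) δ (le_of_lt hexp1) _ _ (hA a) (hA b) (hLDP a b) (hLDP b a)
  intro p q hp hq
  set P : X → ℝ := (push A)^[n] p with hP
  set Q : X → ℝ := (push A)^[n] q with hQ
  have hPQ : hsDiv 1 P Q ≤ f ^ n := by
    calc hsDiv 1 P Q ≤ f ^ n * hsDiv 1 p q :=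
          contraction_iter A hA f (le_of_lt hf0) hpair p q hp hq n
      _ ≤ f ^ n * 1 := mul_le_mul_of_nonneg_left (hsDiv_one_le_one p q hp hq)
          (pow_nonneg (le_of_lt hf0) n)
      _ = f ^ n := mul_one _
  have hfixn : (push A)^[n] σs = σs := Function.iterate_fixed hfix n
  have hσQ : hsDiv 1 σs Q ≤ f ^ n := by
    calc hsDiv 1 σs Q = hsDiv 1 ((push A)^[n] σs) ((push A)^[n] q) := by rw [hfixn]
      _ ≤ f ^ n * hsDiv 1 σs q :=
          contraction_iter A hA f (le_of_lt hf0) hpair σs q hσ hq n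
      _ ≤ f ^ n * 1 := mul_le_mul_of_nonneg_left (hsDiv_one_le_one σs q hσ hq)
          (pow_nonneg (le_of_lt hf0) n)
      _ = f ^ n := mul_one _
  have hQmin : ∀ y, lam / 2 ≤ Q y := by
    intro y
    have h1 : σs y - Q y ≤ f ^ n := le_trans (single_le_hsDiv_one σs Q y) hσQ
    have h2 : lam ≤ σs y := Finset.inf'_le σs (Finset.mem_univ y)
    linarith
  refine le_antisymm ?_ (hsDiv_nonneg _ _ _)
  rw [hsDiv]
  apply le_of_eq
  refine Finset.sum_eq_zero fun y _ => max_eq_left ?_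
  have h1 : P y - Q y ≤ f ^ n := le_trans (single_le_hsDiv_one P Q y) hPQ
  have h2 : lam / 2 ≤ Q y := hQmin y
  nlinarith [hexp'1]
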